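/- (Maximum Modulus Principle) Let Ω ⊆ ℍ be a slice domain and f : Ω → ℍ slice regular. If |f| has a relative maximum at some point p ∈ Ω, then f is constant on Ω. -/

import Mathlib

noncomputable section

abbrev H := Quaternion ℝ

/-- The sphere of quaternion imaginary units. -/
def Sph : Set H := {q : H | q ^ 2 = -1}

/-- The complex line (Slice) through 1 and `I`. -/
def Slice (I : H) : Set H := {q : H | ∃ x y : ℝ, q = (x : H) + y • I}

/-- The 2-sphere `x + y𝕊`. -/
def sphSet (x y : ℝ) : Set H := {q : H | ∃ I ∈ Sph, q = (x : H) + y • I}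

/-- The real axis inside the quaternions. -/
def realAxis : Set H := {q : H | ∃ r : ℝ, q = (r : H)}

/-- `f` is holomorphic on the `I`-Slice of `Ω`: at every point of `Ω ∩ L_I` the
map `(x,y) ↦ f(x+yI)` is (real) differentiable and satisfies the
Cauchy–Riemann equation `∂f/∂x + I ∂f/∂y = 0`. -/
def HoloSlice (Ω : Set H) (f : H → H) (I : H) : Prop :=
  ∀ x y : ℝ, (x : H) + y • I ∈ Ω →
    DifferentiableAt ℝ (fun p : ℝ × ℝ => f ((p.1 : H) + p.2 • I)) (x, y) ∧
    fderiv ℝ (fun p : ℝ × ℝ => f ((p.1 : H) + p.2 • I)) (x, y) (1, 0)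
      + I * fderiv ℝ (fun p : ℝ × ℝ => f ((p.1 : H) + p.2 • I)) (x, y) (0, 1) = 0

/-- Slice regular functions: every Slice restriction is holomorphic. -/
def SliceRegular (Ω : Set H) (f : H → H) : Prop :=
  ∀ I ∈ Sph, HoloSlice Ω f I

/-- A Slice domain: a domain intersecting the real axis whose slices are domains. -/
def IsSliceDomain (Ω : Set H) : Prop :=
  IsOpen Ω ∧ IsConnected Ω ∧ (Ω ∩ realAxis).Nonempty ∧
  ∀ I ∈ Sph, IsConnected (Ω ∩ Slice I)

/-- Axially symmetric set. -/
def AxSymm (C : Set H) : Prop :=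
  ∀ (x y : ℝ), ∀ I ∈ Sph, (x : H) + y • I ∈ C → ∀ J ∈ Sph, (x : H) + y • J ∈ C

/-- Symmetric Slice domain. -/
def IsSymmSliceDomain (Ω : Set H) : Prop := IsSliceDomain Ω ∧ AxSymm Ω

/-- Orthogonality of quaternions w.r.t. the Euclidean inner product `re (p * star q)`. -/
def Orth (I J : H) : Prop := (I * star J).re = 0

/-- `F, G` give a splitting `f = F + G J` of `f` on the Slice `Ω ∩ L_I`,
with `F, G` holomorphic and `L_I`-valued. -/
structure IsSplitting (Ω : Set H) (f : H → H) (I J : H) (F G : H → H) : Prop where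
  mapsF : ∀ q ∈ Ω ∩ Slice I, F q ∈ Slice I
  mapsG : ∀ q ∈ Ω ∩ Slice I, G q ∈ Slice I
  holoF : HoloSlice Ω F I
  holoG : HoloSlice Ω G I
  eq : ∀ q ∈ Ω ∩ Slice I, f q = F q + G q * J

/-- `h` is the regular product `f * g`: it is Slice regular and restricts on some
Slice `L_I` (with `I ⊥ J`, splittings `f = F + GJ`, `g = F' + G'J`) to the
product formula.  (Note `star` is quaternionic conjugation, which restricts to
complex conjugation on each Slice.) -/
def IsRegularProduct (Ω : Set H) (f g h : H → H) : Prop :=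
  SliceRegular Ω h ∧
  ∃ I ∈ Sph, ∃ J ∈ Sph, Orth I J ∧
    ∃ F G F' G' : H → H, IsSplitting Ω f I J F G ∧ IsSplitting Ω g I J F' G' ∧
      ∀ q ∈ Ω ∩ Slice I,
        h q = (F q * F' q - G q * star (G' (star q)))
            + (F q * G' q + G q * star (F' (star q))) * J

/-- `fc` is the regular conjugate of `f`. -/
def IsRegularConj (Ω : Set H) (f fc : H → H) : Prop :=
  SliceRegular Ω fc ∧
  ∃ I ∈ Sph, ∃ J ∈ Sph, Orth I J ∧
    ∃ F G : H → H, IsSplitting Ω f I J F G ∧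
      ∀ q ∈ Ω ∩ Slice I, fc q = star (F (star q)) - G q * J

/-- `fs` is the symmetrization `f^s = f * f^c` of `f`. -/
def IsSymmetrization (Ω : Set H) (f fs : H → H) : Prop :=
  ∃ fc : H → H, IsRegularConj Ω f fc ∧ IsRegularProduct Ω f fc fs

/-- The degenerate set of `f`: union of the spheres `x + y𝕊` (`y ≠ 0`)
contained in `Ω` on which `f` is constant. -/
def DegSet (Ω : Set H) (f : H → H) : Set H :=
  {q : H | ∃ x y : ℝ, y ≠ 0 ∧ q ∈ sphSet x y ∧ sphSet x y ⊆ Ω ∧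
    ∀ p ∈ sphSet x y, ∀ p' ∈ sphSet x y, f p = f p'}

/-!
On the slice `L_I` through `p`, `f` is a holomorphic function of one complex variable (for the
complex structure on `H` given by left multiplication by `L_I ≅ ℂ`) whose modulus has a local
maximum, so it is constant near `p` and, by the identity principle on the connected set
`Ω ∩ L_I`, constant there. In particular `f` is constant on the real points of `Ω`, an open subset
of `ℝ` contained in every slice; the identity principle spreads this value over every `Ω ∩ L_J`,
and these slices cover `Ω`.
-/

open Filter Topology

lemma mem_Sph_iff {I : H} : I ∈ Sph ↔ I.re = 0 ∧ Quaternion.normSq I = 1 := by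
  constructor
  · intro hI
    have hnorm : Quaternion.normSq I = 1 := by
      have h := congrArg Quaternion.normSq (hI : I ^ 2 = -1)
      rw [map_pow, Quaternion.normSq_neg, map_one] at h
      exact (pow_eq_one_iff_of_nonneg Quaternion.normSq_nonneg two_ne_zero).mp h
    refine ⟨Quaternion.sq_eq_neg_normSq.mp ?_, hnorm⟩
    rw [hnorm]
    exact hI
  · rintro ⟨hre, hnorm⟩
    show I ^ 2 = -1
    rw [Quaternion.sq_eq_neg_normSq.mpr hre, hnorm, Quaternion.coe_one]

lemma exists_mem_Sph_mem_Slice (p : H) : ∃ I ∈ Sph, p ∈ Slice I := by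
  by_cases him : p.im = 0
  · refine ⟨Quaternion.ofComplex Complex.I, ?_, p.re, 0, ?_⟩
    · show _ ^ 2 = _
      rw [← map_pow, Complex.I_sq, map_neg, map_one]
    · rw [zero_smul, add_zero, ← add_zero (p.re : H), ← him]
      exact (Quaternion.re_add_im p).symm
  · have hn : ‖p.im‖ ≠ 0 := norm_ne_zero_iff.mpr him
    refine ⟨‖p.im‖⁻¹ • p.im, mem_Sph_iff.mpr ⟨by simp, ?_⟩, p.re, ‖p.im‖, ?_⟩
    · rw [Quaternion.normSq_smul, Quaternion.normSq_eq_norm_mul_self]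
      field_simp
    · rw [smul_inv_smul₀ hn]
      exact (Quaternion.re_add_im p).symm

lemma mul_self_eq_neg_one_of_mem_Sph {I : H} (hI : I ∈ Sph) : I * I = -1 := by
  rw [← sq]; exact hI

section SliceEmb

variable {I : H} (hI : I ∈ Sph)

def sliceEmb : ℂ →ₐ[ℝ] H := Complex.liftAux I (mul_self_eq_neg_one_of_mem_Sph hI)

lemma sliceEmb_apply (z : ℂ) : sliceEmb hI z = (z.re : H) + z.im • I :=
  Complex.liftAux_apply _ _ z

lemma sliceEmb_ofReal (x : ℝ) : sliceEmb hI x = (x : H) :=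
  (sliceEmb hI).commutes x

lemma norm_sliceEmb (z : ℂ) : ‖sliceEmb hI z‖ = ‖z‖ := by
  obtain ⟨hre, hnorm⟩ := mem_Sph_iff.mp hI
  rw [← sq_eq_sq₀ (norm_nonneg _) (norm_nonneg _), sq, sq, ← Quaternion.normSq_eq_norm_mul_self,
    Complex.norm_mul_self_eq_normSq, sliceEmb_apply, Quaternion.normSq_add, Quaternion.normSq_smul,
    Quaternion.normSq_coe, hnorm, Complex.normSq_apply]
  simp [hre]
  ring

lemma isometry_sliceEmb : Isometry (sliceEmb hI) :=
  AddMonoidHomClass.isometry_of_norm _ (norm_sliceEmb hI)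

lemma range_sliceEmb : Set.range (sliceEmb hI) = Slice I := by
  ext q
  simp only [Set.mem_range, sliceEmb_apply, Slice, Set.mem_ofPred_eq]
  constructor
  · rintro ⟨z, rfl⟩
    exact ⟨z.re, z.im, rfl⟩
  · rintro ⟨x, y, rfl⟩
    exact ⟨⟨x, y⟩, rfl⟩

/-- Multiplication on the left, matching the side of `I` in the Cauchy–Riemann equation of
`HoloSlice`. -/
abbrev sliceModule : Module ℂ H := Module.compHom H (sliceEmb hI).toRingHom

lemma sliceModule_smul_def (z : ℂ) (q : H) :
    (letI := sliceModule hI; z • q) = sliceEmb hI z * q := rfl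

abbrev sliceNormedSpace : letI := sliceModule hI; NormedSpace ℂ H :=
  letI := sliceModule hI
  { norm_smul_le := fun z q => by rw [sliceModule_smul_def, norm_mul, norm_sliceEmb] }

lemma sliceModule_isScalarTower : letI := sliceModule hI; IsScalarTower ℝ ℂ H :=
  letI := sliceModule hI
  ⟨fun r z q => by
    rw [sliceModule_smul_def, sliceModule_smul_def, map_smul, smul_mul_assoc]⟩

lemma HoloSlice.differentiableAt_comp_sliceEmb {Ω : Set H} {f : H → H} (hf : HoloSlice Ω f I)
    {z : ℂ} (hz : sliceEmb hI z ∈ Ω) :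
    letI := sliceModule hI; letI := sliceNormedSpace hI
    DifferentiableAt ℂ (f ∘ sliceEmb hI) z := by
  let := sliceModule hI
  let := sliceNormedSpace hI
  have := sliceModule_isScalarTower hI
  rw [sliceEmb_apply] at hz
  obtain ⟨hdiff, hCR⟩ := hf z.re z.im hz
  set L := fderiv ℝ (fun p : ℝ × ℝ => f ((p.1 : H) + p.2 • I)) (z.re, z.im)
  have hL01 : L (0, 1) = I * L (1, 0) := by
    have h := congrArg (I * ·) (eq_neg_of_add_eq_zero_right hCR)
    simpa only [← mul_assoc, mul_self_eq_neg_one_of_mem_Sph hI, neg_one_mul, mul_neg,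
      neg_inj] using h
  have hcomp : f ∘ sliceEmb hI =
      (fun p : ℝ × ℝ => f ((p.1 : H) + p.2 • I)) ∘ Complex.equivRealProdCLM := by
    funext w
    simp [sliceEmb_apply]
  have hderiv : ((ContinuousLinearMap.id ℂ ℂ).smulRight (L (1, 0))).restrictScalars ℝ =
      L.comp (Complex.equivRealProdCLM : ℂ →L[ℝ] ℝ × ℝ) := by
    refine ContinuousLinearMap.ext fun w => ?_
    have hw : ((w.re, w.im) : ℝ × ℝ) = w.re • (1, 0) + w.im • (0, 1) := by simp
    change w • L (1, 0) = L (w.re, w.im)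
    rw [hw, map_add, map_smul, map_smul, hL01, sliceModule_smul_def, sliceEmb_apply, add_mul,
      smul_mul_assoc, Quaternion.coe_mul_eq_smul]
  refine (hasFDerivAt_of_restrictScalars ℝ ?_ hderiv).differentiableAt
  rw [hcomp]
  exact hdiff.hasFDerivAt.comp z Complex.equivRealProdCLM.hasFDerivAt

end SliceEmb

section SliceIdentity

variable {Ω : Set H} {f : H → H} {I : H} (hI : I ∈ Sph)

lemma HoloSlice.analyticOnNhd_comp_sliceEmb (hΩ : IsOpen Ω) (hf : HoloSlice Ω f I) :
    letI := sliceModule hI; letI := sliceNormedSpace hI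
    AnalyticOnNhd ℂ (f ∘ sliceEmb hI) (sliceEmb hI ⁻¹' Ω) := by
  let := sliceModule hI
  let := sliceNormedSpace hI
  exact DifferentiableOn.analyticOnNhd
    (fun z hz ↦ (hf.differentiableAt_comp_sliceEmb hI hz).differentiableWithinAt)
    (hΩ.preimage (isometry_sliceEmb hI).continuous)

lemma HoloSlice.eqOn_of_frequently_eq (hΩ : IsOpen Ω) (hconn : IsPreconnected (Ω ∩ Slice I))
    (hf : HoloSlice Ω f I) {z₀ : ℂ} (hz₀ : sliceEmb hI z₀ ∈ Ω) {c : H}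
    (hfreq : ∃ᶠ z in 𝓝[≠] z₀, f (sliceEmb hI z) = c) :
    ∀ q ∈ Ω ∩ Slice I, f q = c := by
  let := sliceModule hI
  let := sliceNormedSpace hI
  have hconn' : IsPreconnected (sliceEmb hI ⁻¹' Ω) := by
    rwa [← (isometry_sliceEmb hI).isEmbedding.isPreconnected_image,
      Set.image_preimage_eq_inter_range, range_sliceEmb]
  have hconst := (hf.analyticOnNhd_comp_sliceEmb hI hΩ).eqOn_of_preconnected_of_frequently_eq
    analyticOnNhd_const hconn' hz₀ hfreq
  rintro q ⟨hqΩ, hqI⟩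
  obtain ⟨z, rfl⟩ : q ∈ Set.range (sliceEmb hI) := (range_sliceEmb hI).symm ▸ hqI
  exact hconst hqΩ

lemma HoloSlice.eventually_eq_of_isLocalMax_norm (hΩ : IsOpen Ω) (hf : HoloSlice Ω f I)
    {z₀ : ℂ} (hz₀ : sliceEmb hI z₀ ∈ Ω) (hmax : IsLocalMax (‖f ·‖) (sliceEmb hI z₀)) :
    ∀ᶠ z in 𝓝 z₀, f (sliceEmb hI z) = f (sliceEmb hI z₀) := by
  let := sliceModule hI
  let := sliceNormedSpace hI
  have hcont := (isometry_sliceEmb hI).continuous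
  refine Complex.eventually_eq_of_isLocalMax_norm (f := f ∘ sliceEmb hI) ?_
    (hmax.comp_continuous hcont.continuousAt)
  filter_upwards [hcont.continuousAt.preimage_mem_nhds (hΩ.mem_nhds hz₀)] with z hz
  exact hf.differentiableAt_comp_sliceEmb hI hz

end SliceIdentity

lemma coe_mem_Slice (I : H) (x : ℝ) : (x : H) ∈ Slice I := ⟨x, 0, by simp⟩

lemma Complex.frequently_nhdsNE_ofReal {P : ℂ → Prop} {x : ℝ} (h : ∀ᶠ y : ℝ in 𝓝 x, P y) :
    ∃ᶠ z in 𝓝[≠] (x : ℂ), P z :=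
  (Complex.continuous_ofReal.continuousWithinAt.tendsto_nhdsWithin
      fun _ hy ↦ Complex.ofReal_injective.ne hy).frequently
    (eventually_nhdsWithin_of_eventually_nhds (s := {x}ᶜ) h).frequently

/-- Maximum Modulus Principle: if `|f|` has a relative maximum
at `p ∈ Ω`, then `f` is constant on `Ω`. -/
theorem maximum_modulus_principle (Ω : Set H) (hΩ : IsSliceDomain Ω)
    (f : H → H) (hf : SliceRegular Ω f) (p : H) (hp : p ∈ Ω)
    (hmax : ∃ ε > (0 : ℝ), ∀ q ∈ Ω, ‖q - p‖ < ε → ‖f q‖ ≤ ‖f p‖) :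
    ∀ q ∈ Ω, f q = f p := by
  obtain ⟨hΩo, -, ⟨_, hxΩ, x, rfl⟩, hslices⟩ := hΩ
  obtain ⟨ε, hε, hmax⟩ := hmax
  have hlocmax : IsLocalMax (‖f ·‖) p := by
    filter_upwards [hΩo.mem_nhds hp, Metric.ball_mem_nhds p hε] with q hqΩ hqp
    exact hmax q hqΩ (mem_ball_iff_norm.mp hqp)
  obtain ⟨I, hI, hpI⟩ := exists_mem_Sph_mem_Slice p
  obtain ⟨z₀, rfl⟩ : p ∈ Set.range (sliceEmb hI) := (range_sliceEmb hI).symm ▸ hpI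
  have hconstI : ∀ q ∈ Ω ∩ Slice I, f q = f (sliceEmb hI z₀) :=
    (hf I hI).eqOn_of_frequently_eq hI hΩo (hslices I hI).isPreconnected hp
      (eventually_nhdsWithin_of_eventually_nhds
        ((hf I hI).eventually_eq_of_isLocalMax_norm hI hΩo hp hlocmax)).frequently
  intro q hq
  obtain ⟨J, hJ, hqJ⟩ := exists_mem_Sph_mem_Slice q
  have hconstJ : ∀ᶠ y : ℝ in 𝓝 x, f (sliceEmb hJ y) = f (sliceEmb hI z₀) := by
    filter_upwards [Quaternion.continuous_coe.continuousAt.preimage_mem_nhds (hΩo.mem_nhds hxΩ)]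
      with y hy
    rw [sliceEmb_ofReal]
    exact hconstI y ⟨hy, coe_mem_Slice I y⟩
  refine (hf J hJ).eqOn_of_frequently_eq hJ hΩo (hslices J hJ).isPreconnected (z₀ := x) ?_
    (Complex.frequently_nhdsNE_ofReal hconstJ) q ⟨hq, hqJ⟩
  rwa [sliceEmb_ofReal]
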